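/- arXiv:2503.08466 — 7 statements merged into one kernel-verified Lean document; each statement's English description precedes it below -/
import Mathlib

section
/- Let N ≥ 1, γ_th ≥ 0, σ² ≥ 0, and for each n ∈ {1,…,N} let C_n ∈ (0,1], G_n > 0, and I_n ≥ 0. Suppose the real numbers P_1,…,P_N satisfy, for every n, P_n ≥ γ_th·σ²/(C_n·G_n) + γ_th·Σ_{i=1}^{n−1} P_i + γ_th·((1−C_n)/C_n)·I_n. Then for every n, P_n ≥ γ_th·σ²/(C_n·G_n) + γ_th²·σ²·Σ_{i=1}^{n−1} (1+γ_th)^{n−i−1}/(C_i·G_i) + γ_th·((1−C_n)/C_n)·I_n + γ_th²·Σ_{i=1}^{n−1} (1+γ_th)^{n−i−1}·((1−C_i)/C_i)·I_i. -/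
/-- Closed-form lower bound obtained by recursively expanding the rearranged
SINR constraints of the `N` users of a NOMA cluster decoded in order `1,…,N`. -/
theorem noma_power_closed_form_lower_bound
    (N : ℕ) (hN : 1 ≤ N) (γth σ2 : ℝ) (hγ : 0 ≤ γth) (hσ : 0 ≤ σ2)
    (C G I P : ℕ → ℝ)
    (hC : ∀ n ∈ Finset.Icc 1 N, 0 < C n ∧ C n ≤ 1)
    (hG : ∀ n ∈ Finset.Icc 1 N, 0 < G n)
    (hI : ∀ n ∈ Finset.Icc 1 N, 0 ≤ I n)
    (hrec : ∀ n ∈ Finset.Icc 1 N,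
      P n ≥ γth * σ2 / (C n * G n) + γth * ∑ i ∈ Finset.Ico 1 n, P i
              + γth * ((1 - C n) / C n) * I n) :
    ∀ n ∈ Finset.Icc 1 N,
      P n ≥ γth * σ2 / (C n * G n)
              + γth ^ 2 * σ2 * ∑ i ∈ Finset.Ico 1 n, (1 + γth) ^ (n - i - 1) / (C i * G i)
              + γth * ((1 - C n) / C n) * I n
              + γth ^ 2 * ∑ i ∈ Finset.Ico 1 n,
                  (1 + γth) ^ (n - i - 1) * ((1 - C i) / C i) * I i := by
  set Q : ℕ → ℝ := fun i => γth * σ2 / (C i * G i) + γth * ((1 - C i) / C i) * I i with hQ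
  have key : ∀ n, 1 ≤ n → n ≤ N + 1 →
      (∑ i ∈ Finset.Ico 1 n, P i) ≥
        ∑ i ∈ Finset.Ico 1 n, (1 + γth) ^ (n - i - 1) * Q i := by
    intro n hn
    induction n, hn using Nat.le_induction with
    | base => intro _; simp
    | succ n hn ih =>
      intro hle
      have hnN : n ∈ Finset.Icc 1 N := by
        simp only [Finset.mem_Icc]; omega
      have ihn := ih (by omega)
      have hrecn := hrec n hnN
      rw [Finset.sum_Ico_succ_top hn, Finset.sum_Ico_succ_top hn]
      have hsum : ∑ i ∈ Finset.Ico 1 n, (1 + γth) ^ (n + 1 - i - 1) * Q i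
          = (1 + γth) * ∑ i ∈ Finset.Ico 1 n, (1 + γth) ^ (n - i - 1) * Q i := by
        rw [Finset.mul_sum]
        apply Finset.sum_congr rfl
        intro i hi
        rw [Finset.mem_Ico] at hi
        have : n + 1 - i - 1 = (n - i - 1) + 1 := by omega
        rw [this, pow_succ]
        ring
      rw [hsum]
      have h1 : (0:ℝ) ≤ 1 + γth := by linarith
      have : (1 + γth) * ∑ i ∈ Finset.Ico 1 n, (1 + γth) ^ (n - i - 1) * Q i
          ≤ (1 + γth) * ∑ i ∈ Finset.Ico 1 n, P i := by
        exact mul_le_mul_of_nonneg_left ihn h1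
      have hQn : Q n = γth * σ2 / (C n * G n) + γth * ((1 - C n) / C n) * I n := rfl
      have he : n + 1 - n - 1 = 0 := by omega
      rw [he, pow_zero, one_mul, hQn]
      linarith
  intro n hn
  rw [Finset.mem_Icc] at hn
  have hrecn := hrec n (by simp only [Finset.mem_Icc]; exact hn)
  have hkey := key n hn.1 (by omega)
  have hT : γth ^ 2 * σ2 * (∑ i ∈ Finset.Ico 1 n, (1 + γth) ^ (n - i - 1) / (C i * G i))
      + γth ^ 2 * ∑ i ∈ Finset.Ico 1 n, (1 + γth) ^ (n - i - 1) * ((1 - C i) / C i) * I i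
      = γth * ∑ i ∈ Finset.Ico 1 n, (1 + γth) ^ (n - i - 1) * Q i := by
    rw [Finset.mul_sum, Finset.mul_sum, Finset.mul_sum, ← Finset.sum_add_distrib]
    apply Finset.sum_congr rfl
    intro i _
    simp only [hQ]
    ring
  have hmul : γth * ∑ i ∈ Finset.Ico 1 n, (1 + γth) ^ (n - i - 1) * Q i
      ≤ γth * ∑ i ∈ Finset.Ico 1 n, P i := mul_le_mul_of_nonneg_left hkey hγ
  linarith
end

section
/- Let γ ≥ 0 be a real number and (a_n)_{n≥1} a sequence of real numbers. If the real numbers P_1,…,P_N satisfy P_n ≥ a_n + γ·Σ_{i=1}^{n−1} P_i for every n ∈ {1,…,N}, then for every n ∈ {1,…,N}, P_n ≥ a_n + γ·Σ_{i=1}^{n−1} (1+γ)^{n−1−i}·a_i. -/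
lemma noma_sum_lower_bound
    (γ : ℝ) (hγ : 0 ≤ γ) (a : ℕ → ℝ) (N : ℕ) (P : ℕ → ℝ)
    (hP : ∀ n ∈ Finset.Icc 1 N, P n ≥ a n + γ * ∑ i ∈ Finset.Ico 1 n, P i) :
    ∀ n, n ≤ N + 1 →
      (∑ i ∈ Finset.Ico 1 n, P i) ≥ ∑ i ∈ Finset.Ico 1 n, (1 + γ) ^ (n - 1 - i) * a i := by
  intro n
  induction n with
  | zero => simp
  | succ n ih =>
    intro hn
    rcases Nat.eq_zero_or_pos n with h0 | h1
    · subst h0; simp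
    · have hS := ih (by omega)
      have hPn := hP n (Finset.mem_Icc.mpr ⟨h1, by omega⟩)
      rw [Finset.sum_Ico_succ_top h1, Finset.sum_Ico_succ_top h1]
      have hT : ∑ i ∈ Finset.Ico 1 n, (1 + γ) ^ (n + 1 - 1 - i) * a i
          = (1 + γ) * ∑ i ∈ Finset.Ico 1 n, (1 + γ) ^ (n - 1 - i) * a i := by
        rw [Finset.mul_sum]
        refine Finset.sum_congr rfl fun i hi => ?_
        have hi' := (Finset.mem_Ico.mp hi).2
        have : n + 1 - 1 - i = (n - 1 - i) + 1 := by omega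
        rw [this, pow_succ]; ring
      rw [hT]
      have hexp : n + 1 - 1 - n = 0 := by omega
      rw [hexp, pow_zero, one_mul]
      nlinarith [hS, hPn]

/-- Every feasible power allocation satisfying the recursive SINR inequalities is
bounded below by the closed-form minimal allocation. -/
theorem noma_recursive_inequality_lower_bound
    (γ : ℝ) (hγ : 0 ≤ γ) (a : ℕ → ℝ) (N : ℕ) (P : ℕ → ℝ)
    (hP : ∀ n ∈ Finset.Icc 1 N, P n ≥ a n + γ * ∑ i ∈ Finset.Ico 1 n, P i) :
    ∀ n ∈ Finset.Icc 1 N,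
      P n ≥ a n + γ * ∑ i ∈ Finset.Ico 1 n, (1 + γ) ^ (n - 1 - i) * a i := by
  intro n hn
  obtain ⟨h1, h2⟩ := Finset.mem_Icc.mp hn
  have hS := noma_sum_lower_bound γ hγ a N P hP n (by omega)
  have hPn := hP n hn
  nlinarith [hS, hPn]
end

section
/- Let (γ_n)_{n≥1} and (a_n)_{n≥1} be sequences of real numbers, and define (Q_n)_{n≥1} recursively by Q_n = a_n + γ_n·Σ_{i=1}^{n−1} Q_i. Then for every n ≥ 1, Q_n = a_n + γ_n·Σ_{i=1}^{n−1} a_i·Π_{j=i+1}^{n−1} (1+γ_j). -/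
theorem noma_sum_aux (γ a Q : ℕ → ℝ)
    (hQ : ∀ n ≥ 1, Q n = a n + γ n * ∑ i ∈ Finset.Ico 1 n, Q i) :
    ∀ n, 1 ≤ n → ∑ i ∈ Finset.Ico 1 n, Q i
      = ∑ i ∈ Finset.Ico 1 n, a i * ∏ j ∈ Finset.Icc (i + 1) (n - 1), (1 + γ j) := by
  intro n hn
  induction n, hn using Nat.le_induction with
  | base => simp
  | succ n hn ih =>
    rw [Finset.sum_Ico_succ_top hn, Finset.sum_Ico_succ_top hn, ih, hQ n hn, ih]
    simp only [Nat.add_sub_cancel]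
    rw [Finset.Icc_eq_empty (by omega), Finset.prod_empty, mul_one]
    have h2 : ∑ i ∈ Finset.Ico 1 n, a i * ∏ j ∈ Finset.Icc (i + 1) n, (1 + γ j)
        = ∑ i ∈ Finset.Ico 1 n,
            (1 + γ n) * (a i * ∏ j ∈ Finset.Icc (i + 1) (n - 1), (1 + γ j)) := by
      apply Finset.sum_congr rfl
      intro i hi
      simp only [Finset.mem_Ico] at hi
      have hn' : n - 1 + 1 = n := by omega
      have hp := Finset.prod_Icc_succ_top (a := i + 1) (b := n - 1)
        (f := fun j => 1 + γ j) (by omega)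
      rw [hn'] at hp
      rw [hp]
      ring
    rw [h2, ← Finset.mul_sum]
    ring

/-- Closed-form solution of the recursion with user-specific SINR thresholds:
`Q n = a n + γ n * ∑_{i=1}^{n-1} Q i` implies
`Q n = a n + γ n * ∑_{i=1}^{n-1} a i * ∏_{j=i+1}^{n-1} (1 + γ j)`. -/
theorem noma_recursion_closed_form_variable_threshold
    (γ a Q : ℕ → ℝ)
    (hQ : ∀ n ≥ 1, Q n = a n + γ n * ∑ i ∈ Finset.Ico 1 n, Q i) :
    ∀ n ≥ 1, Q n = a n + γ n * ∑ i ∈ Finset.Ico 1 n,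
      a i * ∏ j ∈ Finset.Icc (i + 1) (n - 1), (1 + γ j) := by
  intro n hn
  rw [hQ n hn, noma_sum_aux γ a Q hQ n hn]
end

section
/- Let (γ_n)_{n≥1} be a sequence of nonnegative real numbers and (a_n)_{n≥1} a sequence of real numbers. If the real numbers P_1,…,P_N satisfy P_n ≥ a_n + γ_n·Σ_{i=1}^{n−1} P_i for every n ∈ {1,…,N}, then for every n ∈ {1,…,N}, P_n ≥ a_n + γ_n·Σ_{i=1}^{n−1} a_i·Π_{j=i+1}^{n−1} (1+γ_j). -/
/-- With user-specific nonnegative SINR thresholds, every feasible allocation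
satisfying the recursive inequalities is bounded below by the closed-form
minimal allocation. -/
theorem noma_recursive_inequality_lower_bound_variable_threshold
    (γ a : ℕ → ℝ) (hγ : ∀ n, 0 ≤ γ n) (N : ℕ) (P : ℕ → ℝ)
    (hP : ∀ n ∈ Finset.Icc 1 N, P n ≥ a n + γ n * ∑ i ∈ Finset.Ico 1 n, P i) :
    ∀ n ∈ Finset.Icc 1 N,
      P n ≥ a n + γ n * ∑ i ∈ Finset.Ico 1 n,
        a i * ∏ j ∈ Finset.Icc (i + 1) (n - 1), (1 + γ j) := by
  have hkey : ∀ m, m ≤ N →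
      (∑ i ∈ Finset.Ico 1 m, a i * ∏ j ∈ Finset.Icc (i + 1) (m - 1), (1 + γ j))
        ≤ ∑ i ∈ Finset.Ico 1 m, P i := by
    intro m
    induction m with
    | zero => intro _; simp
    | succ k ih =>
      intro hk
      have ihk := ih (Nat.le_of_succ_le hk)
      rcases Nat.eq_zero_or_pos k with hk0 | hk1
      · subst hk0; simp
      · rw [Finset.sum_Ico_succ_top (by omega : 1 ≤ k),
            Finset.sum_Ico_succ_top (by omega : 1 ≤ k)]
        have hprod : ∀ i ∈ Finset.Ico 1 k,
            a i * ∏ j ∈ Finset.Icc (i + 1) (k + 1 - 1), (1 + γ j)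
              = (a i * ∏ j ∈ Finset.Icc (i + 1) (k - 1), (1 + γ j)) * (1 + γ k) := by
          intro i hi
          have hi' := Finset.mem_Ico.mp hi
          obtain ⟨p, rfl⟩ : ∃ p, k = p + 1 := ⟨k - 1, by omega⟩
          have h2 : p + 1 - 1 = p := by omega
          rw [show p + 1 + 1 - 1 = p + 1 from rfl, h2,
              Finset.prod_Icc_succ_top (by omega : i + 1 ≤ p + 1)]
          ring
        rw [Finset.sum_congr rfl hprod, ← Finset.sum_mul]
        have hPk := hP k (Finset.mem_Icc.mpr ⟨hk1, by omega⟩)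
        have hempty : (Finset.Icc (k + 1) (k + 1 - 1)) = ∅ := by
          apply Finset.Icc_eq_empty; omega
        rw [hempty, Finset.prod_empty, mul_one]
        have h1γ : (0:ℝ) ≤ 1 + γ k := by linarith [hγ k]
        nlinarith [mul_le_mul_of_nonneg_right ihk h1γ, hγ k]
  intro n hn
  obtain ⟨h1, h2⟩ := Finset.mem_Icc.mp hn
  have hPn := hP n hn
  have hsum := hkey n h2
  nlinarith [mul_le_mul_of_nonneg_left hsum (hγ n)]
end

section
/- Let M ≥ 1 and let α_1,…,α_M ≥ 0, β_1,…,β_M ≥ 0, and A_1,…,A_M ≥ 0 be real numbers such that A_k ≥ α_k + β_k·Σ_{m≠k} A_m for every k ∈ {1,…,M}, and suppose Σ_{k=1}^{M} β_k/(1+β_k) < 1. Then the total power satisfies Σ_{k=1}^{M} A_k ≥ P_min, where P_min := (Σ_{k=1}^{M} α_k/(1+β_k)) / (1 − Σ_{k=1}^{M} β_k/(1+β_k)). In particular, if additionally Σ_{k=1}^{M} A_k ≤ P_Max, then P_Max ≥ Σ_{k=1}^{M} A_k ≥ P_min. -/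
/-- Proposition: in a network of `M` clusters with coupled per-cluster power
requirements `A k ≥ α k + β k * ∑_{m ≠ k} A m`, the total allocated power is
bounded below by `P_min`; in particular, if it is also within the power budget
`P_Max`, it lies between `P_min` and `P_Max`. -/
theorem total_power_lower_bound
    (M : ℕ) (hM : 1 ≤ M) (α β A : Fin M → ℝ) (PMax : ℝ)
    (hα : ∀ k, 0 ≤ α k) (hβ : ∀ k, 0 ≤ β k) (hA : ∀ k, 0 ≤ A k)
    (hreq : ∀ k, A k ≥ α k + β k * ∑ m ∈ Finset.univ.erase k, A m)
    (hden : ∑ k, β k / (1 + β k) < 1) :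
    (∑ k, A k ≥ (∑ k, α k / (1 + β k)) / (1 - ∑ k, β k / (1 + β k))) ∧
      (∑ k, A k ≤ PMax →
        PMax ≥ ∑ k, A k ∧
          ∑ k, A k ≥ (∑ k, α k / (1 + β k)) / (1 - ∑ k, β k / (1 + β k))) := by
  set S := ∑ k, A k with hS
  have hpos : ∀ k, (0:ℝ) < 1 + β k := fun k => by linarith [hβ k]
  have hkey : ∀ k, A k ≥ α k / (1 + β k) + (β k / (1 + β k)) * S := by
    intro k
    have herase : ∑ m ∈ Finset.univ.erase k, A m = S - A k := by
      rw [hS, ← Finset.add_sum_erase _ A (Finset.mem_univ k)]; ring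
    have h := hreq k
    rw [herase] at h
    have h2 : (α k + β k * S) / (1 + β k) ≤ A k := by
      rw [div_le_iff₀ (hpos k)]; nlinarith [hpos k]
    calc α k / (1 + β k) + β k / (1 + β k) * S
        = (α k + β k * S) / (1 + β k) := by ring
      _ ≤ A k := h2
  have hsum : S ≥ (∑ k, α k / (1 + β k)) + (∑ k, β k / (1 + β k)) * S := by
    rw [Finset.sum_mul]
    calc S = ∑ k, A k := hS
    _ ≥ ∑ k, (α k / (1 + β k) + (β k / (1 + β k)) * S) :=
        Finset.sum_le_sum fun k _ => hkey k
    _ = (∑ k, α k / (1 + β k)) + ∑ k, (β k / (1 + β k)) * S := by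
        rw [Finset.sum_add_distrib]
  have hmain : S ≥ (∑ k, α k / (1 + β k)) / (1 - ∑ k, β k / (1 + β k)) := by
    rw [ge_iff_le, div_le_iff₀ (by linarith)]
    nlinarith
  exact ⟨hmain, fun h => ⟨h, hmain⟩⟩
end

section
/- Let M ≥ 1 and let α_1,…,α_M ≥ 0 and β_1,…,β_M ≥ 0 be real numbers with Σ_{k=1}^{M} β_k/(1+β_k) < 1, and set P_min := (Σ_{k=1}^{M} α_k/(1+β_k)) / (1 − Σ_{k=1}^{M} β_k/(1+β_k)). Then there exist nonnegative reals A_1,…,A_M, namely A_k = (α_k + β_k·P_min)/(1+β_k), such that A_k = α_k + β_k·Σ_{m≠k} A_m for every k and Σ_{k=1}^{M} A_k = P_min; hence the lower bound P_min on the total power is attained. -/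
/-- The lower bound `P_min` on the total power is attained: the allocation
`A k = (α k + β k * P_min) / (1 + β k)` is nonnegative, satisfies the coupled
per-cluster requirements with equality, and has total power exactly `P_min`. -/
theorem total_power_lower_bound_attained
    (M : ℕ) (hM : 1 ≤ M) (α β : Fin M → ℝ)
    (hα : ∀ k, 0 ≤ α k) (hβ : ∀ k, 0 ≤ β k)
    (hden : ∑ k, β k / (1 + β k) < 1) :
    ∃ A : Fin M → ℝ,
      (∀ k, A k = (α k + β k *
          ((∑ k, α k / (1 + β k)) / (1 - ∑ k, β k / (1 + β k)))) / (1 + β k)) ∧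
      (∀ k, 0 ≤ A k) ∧
      (∀ k, A k = α k + β k * ∑ m ∈ Finset.univ.erase k, A m) ∧
      ∑ k, A k = (∑ k, α k / (1 + β k)) / (1 - ∑ k, β k / (1 + β k)) := by
  set S : ℝ := ∑ k, β k / (1 + β k) with hS
  set N : ℝ := ∑ k, α k / (1 + β k) with hN
  set P : ℝ := N / (1 - S) with hP
  have hpos : ∀ k, (0 : ℝ) < 1 + β k := fun k => by linarith [hβ k]
  have hNnn : 0 ≤ N := Finset.sum_nonneg fun k _ => div_nonneg (hα k) (hpos k).le
  have hSlt : 0 < 1 - S := by linarith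
  have hPnn : 0 ≤ P := div_nonneg hNnn hSlt.le
  refine ⟨fun k => (α k + β k * P) / (1 + β k), fun k => rfl, ?_, ?_, ?_⟩
  · intro k
    exact div_nonneg (by nlinarith [hα k, hβ k]) (hpos k).le
  · have hsum : ∑ k, (α k + β k * P) / (1 + β k) = P := by
      have : ∑ k, (α k + β k * P) / (1 + β k)
          = ∑ k, (α k / (1 + β k) + P * (β k / (1 + β k))) := by
        refine Finset.sum_congr rfl fun k _ => ?_
        field_simp
      rw [this, Finset.sum_add_distrib, ← Finset.mul_sum, ← hN, ← hS, hP]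
      field_simp
      ring
    intro k
    rw [Finset.sum_erase_eq_sub (Finset.mem_univ k), hsum]
    have h := (hpos k).ne'
    field_simp
    ring
  · have : ∑ k, (α k + β k * P) / (1 + β k)
        = ∑ k, (α k / (1 + β k) + P * (β k / (1 + β k))) := by
      refine Finset.sum_congr rfl fun k _ => ?_
      field_simp
    rw [this, Finset.sum_add_distrib, ← Finset.mul_sum, ← hN, ← hS, hP]
    field_simp
    ring
end

section
/- Let M ≥ 1 and let α_1,…,α_M ≥ 0, β_1,…,β_M ≥ 0, and P_Max ≥ 0 be real numbers with Σ_{k=1}^{M} β_k/(1+β_k) < 1, and set P_min := (Σ_{k=1}^{M} α_k/(1+β_k)) / (1 − Σ_{k=1}^{M} β_k/(1+β_k)). Then there exist nonnegative reals A_1,…,A_M satisfying A_k ≥ α_k + β_k·Σ_{m≠k} A_m for every k and Σ_{k=1}^{M} A_k ≤ P_Max if and only if P_min ≤ P_Max. -/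
/-- Feasibility of the power allocation problem is equivalent to `P_min ≤ P_Max`. -/
theorem power_allocation_feasible_iff
    (M : ℕ) (hM : 1 ≤ M) (α β : Fin M → ℝ) (PMax : ℝ)
    (hα : ∀ k, 0 ≤ α k) (hβ : ∀ k, 0 ≤ β k) (hPMax : 0 ≤ PMax)
    (hden : ∑ k, β k / (1 + β k) < 1) :
    (∃ A : Fin M → ℝ,
        (∀ k, 0 ≤ A k) ∧
        (∀ k, A k ≥ α k + β k * ∑ m ∈ Finset.univ.erase k, A m) ∧
        ∑ k, A k ≤ PMax) ↔
      (∑ k, α k / (1 + β k)) / (1 - ∑ k, β k / (1 + β k)) ≤ PMax := by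
  set N : ℝ := ∑ k, α k / (1 + β k) with hNdef
  set D : ℝ := ∑ k, β k / (1 + β k) with hDdef
  have h1β : ∀ k, (0:ℝ) < 1 + β k := fun k => by linarith [hβ k]
  have hN0 : 0 ≤ N := Finset.sum_nonneg fun k _ =>
    div_nonneg (hα k) (h1β k).le
  have hD1 : (0:ℝ) < 1 - D := by linarith
  constructor
  · rintro ⟨A, hA0, hAc, hAP⟩
    set S : ℝ := ∑ k, A k with hSdef
    have hkey : ∀ k, α k / (1 + β k) + (β k / (1 + β k)) * S ≤ A k := by
      intro k
      have herase : ∑ m ∈ Finset.univ.erase k, A m = S - A k := by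
        rw [Finset.sum_erase_eq_sub (Finset.mem_univ k)]
      have hc := hAc k
      rw [herase] at hc
      have heq : α k / (1 + β k) + β k / (1 + β k) * S
          = (α k + β k * S) / (1 + β k) := by ring
      rw [heq, div_le_iff₀ (h1β k)]
      nlinarith [hc]
    have hsum : N + D * S ≤ S := by
      have hle := Finset.sum_le_sum (s := Finset.univ) (fun k _ => hkey k)
      rw [Finset.sum_add_distrib, ← Finset.sum_mul] at hle
      exact hle
    rw [div_le_iff₀ hD1]
    nlinarith
  · intro h
    set S : ℝ := N / (1 - D) with hSdef
    have hS0 : 0 ≤ S := div_nonneg hN0 hD1.le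
    have hSeq : N + D * S = S := by
      rw [hSdef]
      field_simp
      ring
    refine ⟨fun k => (α k + β k * S) / (1 + β k), fun k => ?_, ?_, ?_⟩
    · exact div_nonneg (by nlinarith [hα k, hβ k]) (h1β k).le
    · intro k
      set A : Fin M → ℝ := fun k => (α k + β k * S) / (1 + β k) with hAdef
      have hsumA : ∑ m, A m = S := by
        have : ∀ m, A m = α m / (1 + β m) + (β m / (1 + β m)) * S := by
          intro m
          rw [hAdef]
          field_simp
        rw [Finset.sum_congr rfl (fun m _ => this m), Finset.sum_add_distrib,
          ← Finset.sum_mul, ← hNdef, ← hDdef, hSeq]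
      have herase : ∑ m ∈ Finset.univ.erase k, A m = S - A k := by
        rw [Finset.sum_erase_eq_sub (Finset.mem_univ k), hsumA]
      rw [show A k = A k from rfl] at herase
      have hAk : (1 + β k) * A k = α k + β k * S := by
        rw [hAdef]
        rw [mul_comm, div_mul_eq_mul_div, mul_div_assoc,
          div_self (h1β k).ne', mul_one]
      rw [ge_iff_le, herase]
      nlinarith [hAk]
    · have hsumA : ∑ m, (α m + β m * S) / (1 + β m) = S := by
        have : ∀ m, (α m + β m * S) / (1 + β m)
            = α m / (1 + β m) + (β m / (1 + β m)) * S := by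
          intro m
          field_simp
        rw [Finset.sum_congr rfl (fun m _ => this m), Finset.sum_add_distrib,
          ← Finset.sum_mul, ← hNdef, ← hDdef, hSeq]
      rw [hsumA]
      exact h
end
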